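/- Let 0<q<1. The function f(x) = (Γ_q(x+1))^{1/x} is strictly log-concave and strictly increasing on (0,∞); that is, x ↦ (1/x)·log Γ_q(x+1) is strictly concave and strictly increasing on (0,∞). -/

import Mathlib

open Real

/-- The q-digamma function: ψ_q(x) = -log(1-q) + (log q)·∑_{n=1}^∞ q^{nx}/(1-q^n). -/
noncomputable def qDigamma (q x : ℝ) : ℝ :=
  -Real.log (1 - q) + Real.log q * ∑' n : ℕ, q ^ (((n : ℝ) + 1) * x) / (1 - q ^ (n + 1))

/-- The q-gamma function: Γ_q(x) = (q;q)_∞/(q^x;q)_∞ · (1-q)^{1-x}. -/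
noncomputable def qGamma (q x : ℝ) : ℝ :=
  ((∏' i : ℕ, (1 - q ^ (i + 1))) / ∏' i : ℕ, (1 - q ^ (x + (i : ℝ)))) * (1 - q) ^ (1 - x)

/-- The q-bracket: [x]_q = (1-q^x)/(1-q). -/
noncomputable def qBracket (q x : ℝ) : ℝ := (1 - q ^ x) / (1 - q)

/-!
Expanding each logarithm in the q-Pochhammer products and summing the resulting geometric series
in the other index gives, for `x > 0`,
`(1/x) log Γ_q(x+1) = -log(1-q) + ∑ₙ cₙ (e^{-bₙ x} - 1)/x`
with `cₙ = q^{n+1}/((n+1)(1-q^{n+1})) > 0` and `bₙ = -(n+1) log q > 0`.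
For `b > 0` the slope `(e^{-bx} - 1)/x` is strictly increasing and strictly concave on `(0, ∞)`:
with `u = bx`, the signs of its derivatives
`(1 - e^{-u}(1+u))/x²` and `(e^{-u}(u²+2u+2) - 2)/x³` are fixed by the Taylor bounds for `e^u`.
Both properties survive convergent sums with positive weights.
-/

open Set

theorem StrictConcaveOn.const_mul {E : Type*} [AddCommMonoid E] [Module ℝ E] {s : Set E}
    {f : E → ℝ} {c : ℝ} (hf : StrictConcaveOn ℝ s f) (hc : 0 < c) :
    StrictConcaveOn ℝ s fun x => c * f x :=
  ⟨hf.1, fun x hx y hy hxy a b ha hb hab => by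
    have := mul_lt_mul_of_pos_left (hf.2 hx hy hxy ha hb hab) hc
    simp only [smul_eq_mul] at this ⊢
    linarith⟩

section Tsum

variable {ι E : Type*} [Nonempty ι] {f : ι → E → ℝ} {s : Set E}

theorem strictConcaveOn_tsum [AddCommMonoid E] [Module ℝ E]
    (hf : ∀ i, StrictConcaveOn ℝ s (f i)) (hsum : ∀ x ∈ s, Summable fun i => f i x) :
    StrictConcaveOn ℝ s fun x => ∑' i, f i x := by
  obtain ⟨i₀⟩ := ‹Nonempty ι›
  refine ⟨(hf i₀).1, fun x hx y hy hxy a b ha hb hab => ?_⟩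
  have hz : a • x + b • y ∈ s := (hf i₀).1 hx hy ha.le hb.le hab
  calc a • ∑' i, f i x + b • ∑' i, f i y = ∑' i, (a • f i x + b • f i y) := by
        rw [((hsum x hx).const_smul a).tsum_add ((hsum y hy).const_smul b), tsum_const_smul'',
          tsum_const_smul'']
    _ < ∑' i, f i (a • x + b • y) :=
        Summable.tsum_lt_tsum (fun i => ((hf i).2 hx hy hxy ha hb hab).le)
          ((hf i₀).2 hx hy hxy ha hb hab)
          (((hsum x hx).const_smul a).add ((hsum y hy).const_smul b)) (hsum _ hz)

theorem strictMonoOn_tsum [Preorder E] (hf : ∀ i, StrictMonoOn (f i) s)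
    (hsum : ∀ x ∈ s, Summable fun i => f i x) :
    StrictMonoOn (fun x => ∑' i, f i x) s := fun x hx y hy hxy =>
  have i₀ := Classical.arbitrary ι
  Summable.tsum_lt_tsum (fun i => (hf i hx hy hxy).le) (hf i₀ hx hy hxy) (hsum x hx) (hsum y hy)

end Tsum

noncomputable def expNegSlope (b x : ℝ) : ℝ := (exp (-(b * x)) - 1) / x

section ExpNegSlope

variable {b x : ℝ}

theorem hasDerivAt_expNegSlope (hx : x ≠ 0) :
    HasDerivAt (expNegSlope b) ((1 - exp (-(b * x)) * (1 + b * x)) / x ^ 2) x := by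
  have he : HasDerivAt (fun y => exp (-(b * y))) (exp (-(b * x)) * -b) x := by
    simpa using ((hasDerivAt_id x).const_mul b).neg.exp
  refine ((he.sub_const 1).div (hasDerivAt_id' x) hx).congr_deriv ?_
  field_simp
  ring

theorem hasDerivAt_deriv_expNegSlope (hx : x ≠ 0) :
    HasDerivAt (fun y => (1 - exp (-(b * y)) * (1 + b * y)) / y ^ 2)
      ((exp (-(b * x)) * ((b * x) ^ 2 + 2 * (b * x) + 2) - 2) / x ^ 3) x := by
  have he : HasDerivAt (fun y => exp (-(b * y))) (exp (-(b * x)) * -b) x := by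
    simpa using ((hasDerivAt_id x).const_mul b).neg.exp
  have hl : HasDerivAt (fun y => 1 + b * y) b x := by
    simpa using ((hasDerivAt_id x).const_mul b).const_add 1
  refine (((he.mul hl).const_sub 1).div (hasDerivAt_pow 2 x) (pow_ne_zero 2 hx)).congr_deriv ?_
  simp only [Pi.mul_apply]
  field_simp
  ring

theorem exp_neg_mul_one_add_lt_one {u : ℝ} (hu : 0 < u) : exp (-u) * (1 + u) < 1 := by
  rw [exp_neg, inv_mul_lt_iff₀ (exp_pos u), mul_one, add_comm]
  exact add_one_lt_exp hu.ne'

theorem exp_neg_mul_sq_add_two_mul_add_two_lt_two {u : ℝ} (hu : 0 < u) :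
    exp (-u) * (u ^ 2 + 2 * u + 2) < 2 := by
  have htaylor := sum_le_exp_of_nonneg hu.le 4
  simp only [Finset.sum_range_succ, Finset.sum_range_zero, Nat.factorial] at htaylor
  rw [exp_neg, inv_mul_lt_iff₀ (exp_pos u)]
  norm_num at htaylor
  nlinarith [pow_pos hu 3]

theorem continuousOn_expNegSlope : ContinuousOn (expNegSlope b) (Ioi 0) :=
  fun _ hy => (hasDerivAt_expNegSlope (ne_of_gt hy)).continuousAt.continuousWithinAt

theorem strictMonoOn_expNegSlope (hb : 0 < b) : StrictMonoOn (expNegSlope b) (Ioi 0) := by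
  refine strictMonoOn_of_deriv_pos (convex_Ioi 0) continuousOn_expNegSlope fun x hx => ?_
  rw [interior_Ioi] at hx
  rw [(hasDerivAt_expNegSlope (ne_of_gt hx)).deriv]
  have := exp_neg_mul_one_add_lt_one (mul_pos hb hx)
  exact div_pos (by linarith) (pow_pos hx 2)

theorem strictConcaveOn_expNegSlope (hb : 0 < b) :
    StrictConcaveOn ℝ (Ioi 0) (expNegSlope b) := by
  refine strictConcaveOn_of_deriv2_neg (convex_Ioi 0) continuousOn_expNegSlope fun x hx => ?_
  rw [interior_Ioi] at hx
  have hderiv : deriv (expNegSlope b) =ᶠ[nhds x]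
      fun y => (1 - exp (-(b * y)) * (1 + b * y)) / y ^ 2 := by
    filter_upwards [isOpen_Ioi.mem_nhds hx] with y hy
    exact (hasDerivAt_expNegSlope (ne_of_gt hy)).deriv
  rw [Function.iterate_succ_apply, Function.iterate_one, hderiv.deriv_eq,
    (hasDerivAt_deriv_expNegSlope (ne_of_gt hx)).deriv]
  have := exp_neg_mul_sq_add_two_mul_add_two_lt_two (mul_pos hb hx)
  exact div_neg_of_neg_of_pos (by linarith) (pow_pos hx 3)

end ExpNegSlope

noncomputable def negLogQPochhammer (q y : ℝ) : ℝ :=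
  ∑' n : ℕ, q ^ (y * (n + 1)) / ((n + 1) * (1 - q ^ (n + 1)))

section QSeries

variable {q : ℝ}

theorem rpow_mul_natCast_add_one (hq0 : 0 < q) (y : ℝ) (n : ℕ) :
    q ^ (y * (n + 1)) = (q ^ y) ^ (n + 1) := by
  rw [rpow_mul hq0.le, ← rpow_natCast]
  push_cast
  rfl

theorem one_sub_pow_succ_pos (hq0 : 0 < q) (hq1 : q < 1) (n : ℕ) : 0 < 1 - q ^ (n + 1) :=
  sub_pos.2 (pow_lt_one₀ hq0.le hq1 n.succ_ne_zero)

theorem one_sub_le_mul_one_sub_pow (hq0 : 0 < q) (hq1 : q < 1) (n : ℕ) :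
    1 - q ≤ (n + 1) * (1 - q ^ (n + 1)) := by
  have hpow : q ^ (n + 1) ≤ q := pow_le_of_le_one hq0.le hq1.le n.succ_ne_zero
  have hn : (1 : ℝ) ≤ n + 1 := by simp
  nlinarith

theorem summable_negLogQPochhammer (hq0 : 0 < q) (hq1 : q < 1) {y : ℝ} (hy : 0 < y) :
    Summable fun n : ℕ => q ^ (y * (n + 1)) / ((n + 1) * (1 - q ^ (n + 1))) := by
  have hqy : q ^ y < 1 := rpow_lt_one hq0.le hq1 hy
  refine Summable.of_nonneg_of_le (fun n => ?_) (fun n => ?_)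
    (((summable_geometric_of_lt_one (by positivity) hqy).mul_left (q ^ y)).div_const (1 - q))
  · have := one_sub_pow_succ_pos hq0 hq1 n
    positivity
  · rw [rpow_mul_natCast_add_one hq0, ← pow_succ']
    exact div_le_div_of_nonneg_left (by positivity) (by linarith)
      (one_sub_le_mul_one_sub_pow hq0 hq1 n)

theorem hasSum_rpow_mul_add_one_div (hq0 : 0 < q) (hq1 : q < 1) {t : ℝ} (ht : 0 < t) :
    HasSum (fun n : ℕ => q ^ (t * (n + 1)) / (n + 1)) (-log (1 - q ^ t)) := by
  have hqt : |q ^ t| < 1 := by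
    rw [abs_of_pos (rpow_pos_of_pos hq0 t)]
    exact rpow_lt_one hq0.le hq1 ht
  simpa only [rpow_mul_natCast_add_one hq0] using hasSum_pow_div_log_of_abs_lt_one hqt

theorem hasSum_log_one_sub_rpow_add_nat (hq0 : 0 < q) (hq1 : q < 1) {y : ℝ} (hy : 0 < y) :
    HasSum (fun i : ℕ => log (1 - q ^ (y + i))) (-negLogQPochhammer q y) := by
  set a : ℕ × ℕ → ℝ := fun p => q ^ ((y + p.2) * (p.1 + 1)) / (p.1 + 1)
  have hgeo : ∀ n : ℕ,
      HasSum (fun i => a (n, i)) (q ^ (y * (n + 1)) / ((n + 1) * (1 - q ^ (n + 1)))) := by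
    intro n
    have hr : q ^ (n + 1) < 1 := pow_lt_one₀ hq0.le hq1 n.succ_ne_zero
    rw [div_mul_eq_div_mul_one_div, one_div]
    refine ((hasSum_geometric_of_lt_one (by positivity) hr).mul_left _).congr_fun fun i => ?_
    show q ^ ((y + i) * (n + 1)) / (n + 1) = _
    rw [add_mul, rpow_add hq0, mul_comm (i : ℝ), rpow_mul hq0.le]
    norm_cast
    ring
  have hlog : ∀ i : ℕ, HasSum (fun n => a (n, i)) (-log (1 - q ^ (y + i))) := fun i =>
    hasSum_rpow_mul_add_one_div hq0 hq1 (t := y + i) (by positivity)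
  have ha : Summable a :=
    (summable_prod_of_nonneg fun p => div_nonneg (rpow_nonneg hq0.le _) (by positivity)).2
    ⟨fun n => (hgeo n).summable,
      (summable_negLogQPochhammer hq0 hq1 hy).congr fun n => (hgeo n).tsum_eq.symm⟩
  rw [negLogQPochhammer, (ha.hasSum.prod_fiberwise hgeo).tsum_eq,
    ← (Equiv.prodComm ℕ ℕ).tsum_eq a]
  have h := (ha.prod_symm.hasSum.prod_fiberwise hlog).neg
  simp only [neg_neg] at h
  exact h

theorem tprod_one_sub_rpow_add_nat (hq0 : 0 < q) (hq1 : q < 1) {y : ℝ} (hy : 0 < y) :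
    ∏' i : ℕ, (1 - q ^ (y + i)) = exp (-negLogQPochhammer q y) :=
  (hasProd_of_hasSum_log (fun i => sub_pos.2 (rpow_lt_one hq0.le hq1 (by positivity)))
    (hasSum_log_one_sub_rpow_add_nat hq0 hq1 hy)).tprod_eq

theorem log_qGamma_add_one (hq0 : 0 < q) (hq1 : q < 1) {x : ℝ} (hx : 0 < x) :
    log (qGamma q (x + 1)) =
      negLogQPochhammer q (x + 1) - negLogQPochhammer q 1 - x * log (1 - q) := by
  have hpoch : ∏' i : ℕ, (1 - q ^ (i + 1)) = ∏' i : ℕ, (1 - q ^ ((1 : ℝ) + i)) := by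
    congr! 3 with i
    rw [add_comm, ← rpow_natCast]
    push_cast
    rfl
  rw [qGamma, hpoch, tprod_one_sub_rpow_add_nat hq0 hq1 one_pos,
    tprod_one_sub_rpow_add_nat hq0 hq1 (by positivity), ← exp_sub,
    log_mul (exp_ne_zero _) (rpow_pos_of_pos (by linarith) _).ne', log_exp,
    log_rpow (by linarith)]
  ring

theorem hasSum_mul_expNegSlope (hq0 : 0 < q) (hq1 : q < 1) {x : ℝ} (hx : 0 < x) :
    HasSum (fun n : ℕ => q ^ (n + 1) / ((n + 1) * (1 - q ^ (n + 1))) *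
        expNegSlope ((n + 1) * -log q) x)
      ((negLogQPochhammer q (x + 1) - negLogQPochhammer q 1) / x) := by
  refine (((summable_negLogQPochhammer hq0 hq1 (by positivity : 0 < x + 1)).hasSum.sub
    (summable_negLogQPochhammer hq0 hq1 one_pos).hasSum).div_const x).congr_fun fun n => ?_
  have hexp : exp (-((n + 1) * -log q * x)) = q ^ (x * (n + 1)) := by
    rw [rpow_def_of_pos hq0]
    ring_nf
  have hsplit : q ^ ((x + 1) * (n + 1)) = q ^ (x * (n + 1)) * q ^ (n + 1) := by
    rw [add_mul, rpow_add hq0, one_mul, ← rpow_natCast]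
    push_cast
    rfl
  have hpos := one_sub_pow_succ_pos hq0 hq1 n
  rw [expNegSlope, hexp, hsplit, one_mul, ← rpow_natCast]
  push_cast
  field_simp

theorem one_div_mul_log_qGamma_add_one (hq0 : 0 < q) (hq1 : q < 1) {x : ℝ} (hx : 0 < x) :
    1 / x * log (qGamma q (x + 1)) =
      ∑' n : ℕ, q ^ (n + 1) / ((n + 1) * (1 - q ^ (n + 1))) *
        expNegSlope ((n + 1) * -log q) x - log (1 - q) := by
  rw [(hasSum_mul_expNegSlope hq0 hq1 hx).tsum_eq, log_qGamma_add_one hq0 hq1 hx]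
  field_simp

end QSeries

/-- x ↦ (Γ_q(x+1))^{1/x} is strictly log-concave and strictly increasing
on (0,∞), i.e. x ↦ (1/x) log Γ_q(x+1) is strictly concave and strictly increasing there. -/
theorem qGamma_root_strictConcave_strictMono (q : ℝ) (hq0 : 0 < q) (hq1 : q < 1) :
    StrictConcaveOn ℝ (Set.Ioi 0) (fun x => (1 / x) * Real.log (qGamma q (x + 1))) ∧
    StrictMonoOn (fun x => (1 / x) * Real.log (qGamma q (x + 1))) (Set.Ioi 0) := by
  set c : ℕ → ℝ := fun n => q ^ (n + 1) / ((n + 1) * (1 - q ^ (n + 1)))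
  set b : ℕ → ℝ := fun n => (n + 1) * -log q
  have hc (n : ℕ) : 0 < c n :=
    div_pos (pow_pos hq0 _) (mul_pos (by positivity) (one_sub_pow_succ_pos hq0 hq1 n))
  have hb (n : ℕ) : 0 < b n := mul_pos (by positivity) (neg_pos.2 (log_neg hq0 hq1))
  have hsum : ∀ x ∈ Ioi (0 : ℝ), Summable fun n => c n * expNegSlope (b n) x :=
    fun x hx => (hasSum_mul_expNegSlope hq0 hq1 hx).summable
  have hexpand : EqOn ((fun x => ∑' n, c n * expNegSlope (b n) x) + fun _ => -log (1 - q))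
      (fun x => 1 / x * log (qGamma q (x + 1))) (Ioi 0) := fun x hx =>
    ((one_div_mul_log_qGamma_add_one hq0 hq1 hx).trans (sub_eq_add_neg _ _)).symm
  have hconcave : StrictConcaveOn ℝ (Ioi 0) fun x => ∑' n, c n * expNegSlope (b n) x :=
    strictConcaveOn_tsum (fun n => (strictConcaveOn_expNegSlope (hb n)).const_mul (hc n)) hsum
  have hmono : StrictMonoOn (fun x => ∑' n, c n * expNegSlope (b n) x) (Ioi 0) :=
    strictMonoOn_tsum (fun n _ hx _ hy hxy =>
      mul_lt_mul_of_pos_left (strictMonoOn_expNegSlope (hb n) hx hy hxy) (hc n)) hsum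
  refine ⟨(hconcave.add_const _).congr hexpand, fun x hx y hy hxy => ?_⟩
  rw [← hexpand hx, ← hexpand hy]
  exact add_lt_add_left (hmono hx hy hxy) _
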